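/- For every fixed σ > 0 and γ > 0, the function μ ↦ R(μ) = (1/π)∫₀^π 1(E_{μ,σ}(θ) ≤ γ) dθ attains its global minimum over [0, ∞) at some point μ* ∈ [0, ∞), and this minimum value is strictly positive: R(μ*) > 0. In fact, for every μ ≥ 0 and γ > 0 one has R(μ) > 0. -/

import Mathlib

open Classical MeasureTheory ProbabilityTheory

/-- `Φ`, the standard Gaussian cumulative distribution function. -/
noncomputable def Phi (x : ℝ) : ℝ := ((gaussianReal 0 1) (Set.Iic x)).toReal

/-- `E_{μ,σ}(θ)`: reducible error of the affine classifier `sign(sin(θ)x + cos(θ))` for the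
antipodal equal-prior mixture of `N(−μ, σ²)` and `N(μ, σ²)`. -/
noncomputable def redErr (μ σ θ : ℝ) : ℝ :=
  Phi (μ / σ) - (1 / 2) * Phi ((μ * Real.sin θ - Real.cos θ) / (σ * Real.sin θ))
    - (1 / 2) * Phi ((μ * Real.sin θ + Real.cos θ) / (σ * Real.sin θ))

/-- `R(μ) = (1/π) ∫₀^π 1(E_{μ,σ}(θ) ≤ γ) dθ`, the Rashomon ratio. -/
noncomputable def rashRatio (σ γ μ : ℝ) : ℝ :=
  (1 / Real.pi) * ∫ θ in (0 : ℝ)..Real.pi, (if redErr μ σ θ ≤ γ then (1 : ℝ) else 0)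

/-!
Write `E_{μ,σ}(θ) = phiDefect (μ/σ) (cot θ / σ)` with
`phiDefect m t = Φ(m) - (Φ(m - t) + Φ(m + t)) / 2`. For `m > 0` this is even in `t` and strictly
increasing in `|t|`: when `t` grows, `Φ(m + t)` gains the Gaussian mass of an interval
`[m + t₁, m + t₂]` while `Φ(m - t)` loses that of its mirror image `[m - t₂, m - t₁]` about `m`,
which is closer to `0` and hence carries more mass. Since `cot` is injective on `(0, π)`, every
level set of `E_{μ,σ}` in `(0, π)` is finite (and `E_{0,σ} ≡ 0`), so dominated convergence makes
`R` continuous on `[0, ∞)`. As `phiDefect m t → 0` when `m → ∞`, `R(μ) → 1 = R(0)`, so `R` attains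
its minimum on `[0, ∞)`. Finally `E_{μ,σ}(π/2) = 0 < γ`, so `E_{μ,σ} ≤ γ` on a neighbourhood of
`π/2` and `R(μ) > 0`.
-/

open Filter Topology Set Real

lemma Phi_eq_integral (x : ℝ) : Phi x = ∫ t in Iic x, gaussianPDFReal 0 1 t := by
  rw [Phi, gaussianReal_apply_eq_integral 0 one_ne_zero, ENNReal.toReal_ofReal]
  exact setIntegral_nonneg measurableSet_Iic fun t _ => gaussianPDFReal_nonneg 0 1 t

lemma Phi_sub_Phi (a b : ℝ) : Phi b - Phi a = ∫ t in a..b, gaussianPDFReal 0 1 t := by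
  rw [Phi_eq_integral, Phi_eq_integral, intervalIntegral.integral_Iic_sub_Iic
    (integrable_gaussianPDFReal 0 1).integrableOn (integrable_gaussianPDFReal 0 1).integrableOn]

@[fun_prop]
lemma continuous_Phi : Continuous Phi := by
  have h : Phi = fun x => Phi 0 + ∫ t in (0 : ℝ)..x, gaussianPDFReal 0 1 t := by
    ext x; rw [← Phi_sub_Phi]; ring
  rw [h]
  exact continuous_const.add <| intervalIntegral.continuous_primitive
    (fun _ _ => (integrable_gaussianPDFReal 0 1).intervalIntegrable) 0

lemma Phi_add_Phi_neg (x : ℝ) : Phi x + Phi (-x) = 1 := by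
  have h_neg : Phi (-x) = ∫ t in Ioi x, gaussianPDFReal 0 1 t := by
    rw [Phi_eq_integral, ← integral_comp_neg_Ioi]
    simp only [gaussianPDFReal_def, sub_zero, even_two.neg_pow]
  rw [Phi_eq_integral, h_neg, ← setIntegral_union (Iic_disjoint_Ioi le_rfl) measurableSet_Ioi
    (integrable_gaussianPDFReal 0 1).integrableOn (integrable_gaussianPDFReal 0 1).integrableOn,
    Iic_union_Ioi, setIntegral_univ, integral_gaussianPDFReal_eq_one 0 one_ne_zero]

lemma tendsto_Phi_atTop : Tendsto Phi atTop (𝓝 1) := by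
  unfold Phi
  have h := tendsto_measure_Iic_atTop (gaussianReal 0 1)
  rw [measure_univ] at h
  simpa [Function.comp_def] using (ENNReal.tendsto_toReal ENNReal.one_ne_top).comp h

@[fun_prop]
lemma continuous_gaussianPDFReal (μ : ℝ) (v : NNReal) : Continuous (gaussianPDFReal μ v) := by
  rw [gaussianPDFReal_def]; fun_prop

lemma gaussianPDFReal_lt_of_sq_lt {x y : ℝ} (h : y ^ 2 < x ^ 2) :
    gaussianPDFReal 0 1 x < gaussianPDFReal 0 1 y := by
  simp only [gaussianPDFReal, sub_zero]
  refine mul_lt_mul_of_pos_left (exp_lt_exp.2 ?_) (by positivity)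
  push_cast
  linarith

lemma strictAntiOn_Phi_add_add_Phi_sub {m : ℝ} (hm : 0 < m) :
    StrictAntiOn (fun t => Phi (m + t) + Phi (m - t)) (Ici 0) := by
  intro t₁ ht₁ t₂ _ h12
  have hpos : 0 < ∫ x in (m + t₁)..(m + t₂),
      (gaussianPDFReal 0 1 (2 * m - x) - gaussianPDFReal 0 1 x) := by
    refine intervalIntegral.intervalIntegral_pos_of_pos_on ?_ (fun x hx => ?_) (by linarith)
    · exact (by fun_prop : Continuous fun x =>
        gaussianPDFReal 0 1 (2 * m - x) - gaussianPDFReal 0 1 x).intervalIntegrable _ _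
    · have : m < x := by linarith [hx.1, show (0 : ℝ) ≤ t₁ from ht₁]
      exact sub_pos.2 (gaussianPDFReal_lt_of_sq_lt (by nlinarith))
  have hreflect : ∫ x in (m + t₁)..(m + t₂), gaussianPDFReal 0 1 (2 * m - x)
      = ∫ x in (m - t₂)..(m - t₁), gaussianPDFReal 0 1 x := by
    rw [intervalIntegral.integral_comp_sub_left]; ring_nf
  rw [intervalIntegral.integral_sub, hreflect, ← Phi_sub_Phi, ← Phi_sub_Phi] at hpos
  · simp only; linarith
  all_goals exact (by fun_prop : Continuous _).intervalIntegrable _ _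

noncomputable def phiDefect (m t : ℝ) : ℝ := Phi m - 1 / 2 * Phi (m - t) - 1 / 2 * Phi (m + t)

lemma phiDefect_neg (m t : ℝ) : phiDefect m (-t) = phiDefect m t := by
  simp only [phiDefect, sub_neg_eq_add, ← sub_eq_add_neg]
  ring

lemma strictMonoOn_phiDefect {m : ℝ} (hm : 0 < m) : StrictMonoOn (phiDefect m) (Ici 0) := by
  intro t₁ ht₁ t₂ ht₂ h12
  have := strictAntiOn_Phi_add_add_Phi_sub hm ht₁ ht₂ h12
  simp only [phiDefect] at *
  linarith

lemma finite_setOf_phiDefect_eq {m : ℝ} (hm : 0 < m) (γ : ℝ) :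
    {t | phiDefect m t = γ}.Finite := by
  set A := Ici 0 ∩ {t | phiDefect m t = γ}
  have hA : A.Finite := Set.Subsingleton.finite fun x hx y hy =>
    (strictMonoOn_phiDefect hm).injOn hx.1 hy.1 (hx.2.trans hy.2.symm)
  refine (hA.union (hA.preimage neg_injective.injOn)).subset fun t ht => ?_
  rcases le_total 0 t with h | h
  · exact Or.inl ⟨h, ht⟩
  · exact Or.inr ⟨neg_nonneg.2 h, (phiDefect_neg m t).trans ht⟩

lemma tendsto_phiDefect_atTop (t : ℝ) : Tendsto (fun m => phiDefect m t) atTop (𝓝 0) := by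
  have hshift (c : ℝ) : Tendsto (fun m => Phi (m + c)) atTop (𝓝 1) :=
    tendsto_Phi_atTop.comp (tendsto_atTop_add_const_right _ c tendsto_id)
  have h := (tendsto_Phi_atTop.sub ((hshift (-t)).const_mul (1 / 2))).sub
    ((hshift t).const_mul (1 / 2))
  simp only [← sub_eq_add_neg] at h
  unfold phiDefect
  convert h using 2
  norm_num

lemma redErr_eq_phiDefect {μ σ θ : ℝ} (hσ : σ ≠ 0) (hθ : sin θ ≠ 0) :
    redErr μ σ θ = phiDefect (μ / σ) (cot θ / σ) := by
  rw [redErr, phiDefect, cot_eq_cos_div_sin]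
  congr 4 <;> field_simp

lemma redErr_zero_left (σ θ : ℝ) : redErr 0 σ θ = 0 := by
  have h := Phi_add_Phi_neg (cos θ / (σ * sin θ))
  simp only [redErr, zero_mul, zero_sub, zero_add, zero_div, neg_div] at *
  have h₀ := Phi_add_Phi_neg 0
  rw [neg_zero] at h₀
  linarith

lemma redErr_pi_div_two (μ σ : ℝ) : redErr μ σ (π / 2) = 0 := by
  simp only [redErr, sin_pi_div_two, cos_pi_div_two, mul_one, sub_zero, add_zero]
  ring

lemma continuous_redErr_left (σ θ : ℝ) : Continuous fun μ => redErr μ σ θ := by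
  unfold redErr; fun_prop

lemma measurable_redErr (μ σ : ℝ) : Measurable (redErr μ σ) := by
  unfold redErr; fun_prop

lemma continuousAt_redErr {μ σ θ : ℝ} (hσ : σ ≠ 0) (hθ : sin θ ≠ 0) :
    ContinuousAt (redErr μ σ) θ := by
  have h : σ * sin θ ≠ 0 := mul_ne_zero hσ hθ
  unfold redErr
  fun_prop (disch := exact h)

lemma Real.injOn_cot : InjOn cot (Ioo 0 π) := by
  have hcot (z : ℝ) : cot z = tan (π / 2 - z) := by
    rw [tan_pi_div_two_sub, cot_eq_cos_div_sin, tan_eq_sin_div_cos, inv_div]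
  intro x hx y hy hxy
  rw [hcot, hcot] at hxy
  have := injOn_tan ⟨by linarith [hx.2], by linarith [hx.1]⟩
    ⟨by linarith [hy.2], by linarith [hy.1]⟩ hxy
  linarith

lemma volume_setOf_redErr_eq {μ σ γ : ℝ} (hσ : 0 < σ) (hμ : 0 ≤ μ) (hγ : γ ≠ 0) :
    volume {θ | θ ∈ Ioo 0 π ∧ redErr μ σ θ = γ} = 0 := by
  rcases hμ.eq_or_lt with rfl | hμ
  · simp [redErr_zero_left, hγ.symm]
  have hS : {t | phiDefect (μ / σ) (t / σ) = γ}.Finite :=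
    (finite_setOf_phiDefect_eq (div_pos hμ hσ) γ).preimage
      fun _ _ _ _ h => (div_left_inj' hσ.ne').1 h
  refine Set.Finite.measure_zero ?_ volume
  refine Set.Finite.of_finite_image (hS.subset ?_) (injOn_cot.mono fun θ hθ => hθ.1)
  rintro _ ⟨θ, ⟨hθ, hE⟩, rfl⟩
  rwa [redErr_eq_phiDefect hσ.ne' (sin_pos_of_pos_of_lt_pi hθ.1 hθ.2).ne'] at hE

lemma tendsto_ite_le_of_ne {ι : Type*} {l : Filter ι} {u : ι → ℝ} {x γ : ℝ}
    (hu : Tendsto u l (𝓝 x)) (hx : x ≠ γ) :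
    Tendsto (fun i => if u i ≤ γ then (1 : ℝ) else 0) l (𝓝 (if x ≤ γ then 1 else 0)) := by
  rcases hx.lt_or_gt with h | h
  · rw [if_pos h.le]
    exact tendsto_const_nhds.congr'
      ((hu.eventually (eventually_lt_nhds h)).mono fun i hi => (if_pos hi.le).symm)
  · rw [if_neg h.not_ge]
    exact tendsto_const_nhds.congr'
      ((hu.eventually (eventually_gt_nhds h)).mono fun i hi => (if_neg hi.not_ge).symm)

lemma measurable_ite_le {f : ℝ → ℝ} (hf : Measurable f) (γ : ℝ) :
    Measurable fun θ => if f θ ≤ γ then (1 : ℝ) else 0 :=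
  Measurable.ite (measurableSet_le hf measurable_const) measurable_const measurable_const

lemma tendsto_integral_ite_le {ι : Type*} {l : Filter ι} [l.IsCountablyGenerated]
    {F : ι → ℝ → ℝ} {f : ℝ → ℝ} {a b γ : ℝ} (hF : ∀ i, Measurable (F i)) (hab : a ≤ b)
    (hlim : ∀ᵐ θ, θ ∈ Ioo a b → Tendsto (F · θ) l (𝓝 (f θ)) ∧ f θ ≠ γ) :
    Tendsto (fun i => ∫ θ in a..b, if F i θ ≤ γ then (1 : ℝ) else 0) l
      (𝓝 (∫ θ in a..b, if f θ ≤ γ then (1 : ℝ) else 0)) := by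
  refine intervalIntegral.tendsto_integral_filter_of_dominated_convergence (fun _ => 1)
    (Eventually.of_forall fun i => ?_) (Eventually.of_forall fun i => Eventually.of_forall
      fun θ _ => ?_) intervalIntegrable_const ?_
  · exact (measurable_ite_le (hF i) γ).aestronglyMeasurable
  · split_ifs <;> simp
  · filter_upwards [hlim, Measure.ae_ne volume b] with θ hθ hne hmem
    rw [uIoc_of_le hab] at hmem
    have h := hθ ⟨hmem.1, hmem.2.lt_of_ne hne⟩
    exact tendsto_ite_le_of_ne h.1 h.2

lemma continuousOn_rashRatio {σ γ : ℝ} (hσ : 0 < σ) (hγ : γ ≠ 0) :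
    ContinuousOn (rashRatio σ γ) (Ici 0) := by
  intro μ₀ hμ₀
  refine (continuousAt_const.mul ?_).continuousWithinAt
  refine tendsto_integral_ite_le (measurable_redErr · σ) pi_pos.le ?_
  filter_upwards [measure_eq_zero_iff_ae_notMem.1 (volume_setOf_redErr_eq hσ hμ₀ hγ)]
    with θ hθ hmem
  exact ⟨(continuous_redErr_left σ θ).tendsto μ₀, fun h => hθ ⟨hmem, h⟩⟩

lemma tendsto_rashRatio_atTop {σ γ : ℝ} (hσ : 0 < σ) (hγ : 0 < γ) :
    Tendsto (rashRatio σ γ) atTop (𝓝 1) := by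
  have h := tendsto_integral_ite_le (l := atTop) (f := fun _ => 0) (γ := γ)
    (measurable_redErr · σ) pi_pos.le <| Eventually.of_forall fun θ hθ => by
      refine ⟨?_, hγ.ne⟩
      have hsin := (sin_pos_of_pos_of_lt_pi hθ.1 hθ.2).ne'
      simp only [redErr_eq_phiDefect hσ.ne' hsin]
      exact (tendsto_phiDefect_atTop _).comp (tendsto_id.atTop_div_const hσ)
  have hπ : (1 : ℝ) = 1 / π * ∫ _ in (0 : ℝ)..π, if (0 : ℝ) ≤ γ then (1 : ℝ) else 0 := by
    simp [hγ.le, pi_ne_zero]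
  rw [hπ]
  exact h.const_mul _

lemma rashRatio_zero (σ : ℝ) {γ : ℝ} (hγ : 0 ≤ γ) : rashRatio σ γ 0 = 1 := by
  simp [rashRatio, redErr_zero_left, hγ, pi_ne_zero]

lemma rashRatio_pos {σ γ : ℝ} (hσ : σ ≠ 0) (hγ : 0 < γ) (μ : ℝ) : 0 < rashRatio σ γ μ := by
  obtain ⟨U, hU, hU_open, hU_mem⟩ := mem_nhds_iff.1 <|
    (continuousAt_redErr (μ := μ) hσ (by simp)).preimage_mem_nhds <|
      Iio_mem_nhds ((redErr_pi_div_two μ σ).symm ▸ hγ)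
  have hUpos : 0 < volume (U ∩ Ioo 0 π) :=
    (hU_open.inter isOpen_Ioo).measure_pos volume
      ⟨π / 2, hU_mem, by linarith [pi_pos], by linarith [pi_pos]⟩
  have hbound (θ : ℝ) : 0 ≤ (if redErr μ σ θ ≤ γ then (1 : ℝ) else 0) ∧
      ‖if redErr μ σ θ ≤ γ then (1 : ℝ) else 0‖ ≤ 1 := by
    split_ifs <;> norm_num
  refine mul_pos (by positivity) ?_
  rw [intervalIntegral.integral_pos_iff_support_of_nonneg_ae
    (Eventually.of_forall fun θ => (hbound θ).1)
    (intervalIntegrable_const.mono_fun' (measurable_ite_le (measurable_redErr μ σ) γ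
      ).aestronglyMeasurable (Eventually.of_forall fun θ => (hbound θ).2))]
  refine ⟨pi_pos, hUpos.trans_le (measure_mono ?_)⟩
  rintro θ ⟨hθU, hθ⟩
  exact ⟨by simp [(show redErr μ σ θ < γ from hU hθU).le], Ioo_subset_Ioc_self hθ⟩

lemma ContinuousOn.exists_isMinOn_Ici_of_tendsto_atTop {f : ℝ → ℝ} {a L x₀ : ℝ}
    (hf : ContinuousOn f (Ici a)) (hlim : Tendsto f atTop (𝓝 L)) (hx₀ : x₀ ∈ Ici a)
    (hfx₀ : f x₀ ≤ L) : ∃ x ∈ Ici a, IsMinOn f (Ici a) x := by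
  by_cases h : ∃ x₁ ∈ Ici a, f x₁ < L
  · obtain ⟨x₁, hx₁, hfx₁⟩ := h
    refine hf.exists_isMinOn' isClosed_Ici hx₁ (mem_inf_principal.2 ?_)
    obtain ⟨M, hM⟩ := eventually_atTop.1 (hlim.eventually (eventually_gt_nhds hfx₁))
    filter_upwards [(isCompact_Icc (a := a) (b := M)).compl_mem_cocompact] with x hx hxa
    exact (hM x (le_of_lt (not_le.1 fun hxM => hx ⟨hxa, hxM⟩))).le
  · push Not at h
    exact ⟨x₀, hx₀, fun x hx => hfx₀.trans (h x hx)⟩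

/-- For fixed `σ > 0` and `γ > 0`, the Rashomon ratio `μ ↦ R(μ)` attains a
global minimum over `[0, ∞)` at some `μ* ≥ 0`, the minimum value is strictly positive, and
in fact `R(μ) > 0` for every `μ ≥ 0`. -/
theorem rashRatio_attains_positive_minimum
    (σ γ : ℝ) (hσ : 0 < σ) (hγ : 0 < γ) :
    (∃ μstar : ℝ, 0 ≤ μstar ∧
      (∀ μ : ℝ, 0 ≤ μ → rashRatio σ γ μstar ≤ rashRatio σ γ μ) ∧
      0 < rashRatio σ γ μstar) ∧
    (∀ μ : ℝ, 0 ≤ μ → 0 < rashRatio σ γ μ) := by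
  obtain ⟨μstar, hμstar, hmin⟩ :=
    (continuousOn_rashRatio hσ hγ.ne').exists_isMinOn_Ici_of_tendsto_atTop
      (tendsto_rashRatio_atTop hσ hγ) self_mem_Ici (rashRatio_zero σ hγ.le).le
  exact ⟨⟨μstar, hμstar, fun μ hμ => hmin hμ, rashRatio_pos hσ.ne' hγ μstar⟩,
    fun μ _ => rashRatio_pos hσ.ne' hγ μ⟩
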